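/- Fix ω₁, ω₂ ∈ ℂ∖{0} and λ ∈ ℂ; set q = exp(πiω₁/ω₂), q̃ = exp(πiω₂/ω₁), and assume q² ≠ 1 and q̃² ≠ 1. On the space of all functions φ : ℂ → ℂ define the operators of the representation π_λ: (Kφ)(t) = e^{πiλ/ω₂}·φ(t − iω₁), (Eφ)(t) = (q − q⁻¹)⁻¹·e^{−2πt/ω₂}·(φ(t) − φ(t − iω₁)), (Fφ)(t) = q(q − q⁻¹)⁻¹·e^{2πt/ω₂}·(e^{πiλ/ω₂}·φ(t) − e^{−πiλ/ω₂}·φ(t + iω₁)); and the operators of the modular dual representation π̃_λ obtained by exchanging ω₁ ↔ ω₂ (and q ↔ q̃): (K̃φ)(t) = e^{πiλ/ω₁}·φ(t − iω₂), (Ẽφ)(t) = (q̃ − q̃⁻¹)⁻¹·e^{−2πt/ω₁}·(φ(t) − φ(t − iω₂)), (F̃φ)(t) = q̃(q̃ − q̃⁻¹)⁻¹·e^{2πt/ω₁}·(e^{πiλ/ω₁}·φ(t) − e^{−πiλ/ω₁}·φ(t + iω₂)). Then every operator from {K, E, F} commutes with every operator from {K̃, Ẽ, F̃}: X ∘ Y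 = Y ∘ X for all X ∈ {K, E, F} and Y ∈ {K̃, Ẽ, F̃}. -/

import Mathlib

/-!
Each operator of `π_λ` is a linear combination of operators `φ ↦ g · φ(· + s)` with `s ∈ iω₁ℤ`
and `g` being `iω₂`-periodic; for `π̃_λ` the roles of `ω₁` and `ω₂` are exchanged. Operators
`φ ↦ g · φ(· + s)` and `φ ↦ h · φ(· + s')` commute as soon as `g` is `s'`-periodic and `h` is
`s`-periodic, since both composites are `φ ↦ g · h · φ(· + s + s')`. The exponentials
`e^{±2πt/ω}` are `iω`-periodic.
-/

/-- The operator `φ(t) ↦ g(t)·φ(t + s)` on functions `ℂ → ℂ`. -/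
noncomputable def shiftMulOp (g : ℂ → ℂ) (s : ℂ) : (ℂ → ℂ) →ₗ[ℂ] (ℂ → ℂ) where
  toFun φ := fun t => g t * φ (t + s)
  map_add' φ ψ := by funext t; simp [mul_add]
  map_smul' c φ := by funext t; simp [smul_eq_mul]; ring

open Function

lemma shiftMulOp_commute {g h : ℂ → ℂ} {s s' : ℂ} (hg : Periodic g s') (hh : Periodic h s) :
    Commute (shiftMulOp g s) (shiftMulOp h s') := by
  refine LinearMap.ext fun φ => funext fun t => ?_
  show g t * (h (t + s) * φ (t + s + s')) = h t * (g (t + s') * φ (t + s' + s))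
  rw [hh, hg, add_right_comm]
  ring

def periodicShiftOps (p p' : ℂ) : Set (Module.End ℂ (ℂ → ℂ)) :=
  {T | ∃ g s, Periodic g p' ∧ s ∈ AddSubgroup.zmultiples p ∧ T = shiftMulOp g s}

lemma shiftMulOp_mem_adjoin_periodicShiftOps {p p' s : ℂ} {g : ℂ → ℂ} (hg : Periodic g p')
    (hs : s ∈ AddSubgroup.zmultiples p) :
    shiftMulOp g s ∈ Algebra.adjoin ℂ (periodicShiftOps p p') :=
  Algebra.subset_adjoin ⟨g, s, hg, hs, rfl⟩

lemma commute_of_mem_adjoin_periodicShiftOps {p p' : ℂ} {X Y : Module.End ℂ (ℂ → ℂ)}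
    (hX : X ∈ Algebra.adjoin ℂ (periodicShiftOps p p'))
    (hY : Y ∈ Algebra.adjoin ℂ (periodicShiftOps p' p)) :
    Commute X Y := by
  have generators : ∀ A ∈ periodicShiftOps p p', ∀ B ∈ periodicShiftOps p' p, Commute A B := by
    rintro _ ⟨g, s, hg, ⟨m, rfl⟩, rfl⟩ _ ⟨h, s', hh, ⟨n, rfl⟩, rfl⟩
    exact shiftMulOp_commute (hg.zsmul n) (hh.zsmul m)
  refine Algebra.commute_of_mem_adjoin_of_forall_mem_commute hY fun B hB => ?_
  exact (Algebra.commute_of_mem_adjoin_of_forall_mem_commute hX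
    fun A hA => (generators A hA B hB).symm).symm

lemma periodic_exp_two_pi_mul_div {ω : ℂ} (hω : ω ≠ 0) :
    Periodic (fun t => Complex.exp (2 * Real.pi * t / ω)) (Complex.I * ω) := fun t => by
  show Complex.exp _ = Complex.exp _
  rw [show 2 * (Real.pi : ℂ) * (t + Complex.I * ω) / ω
      = 2 * Real.pi * t / ω + 2 * Real.pi * Complex.I by field_simp,
    Complex.exp_add, Complex.exp_two_pi_mul_I, mul_one]

lemma periodic_exp_neg_two_pi_mul_div {ω : ℂ} (hω : ω ≠ 0) :
    Periodic (fun t => Complex.exp (-(2 * Real.pi * t / ω))) (Complex.I * ω) := fun t => by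
  simp only [Complex.exp_neg, periodic_exp_two_pi_mul_div hω t]

/-- The operators `K, E, F` of `π_λ` for `(ω₁, ω₂) = (ω, ω')`; with `(ω, ω') = (ω₂, ω₁)` they
are `K̃, Ẽ, F̃`. -/
noncomputable def principalSeriesOps (ω ω' lam : ℂ) : List (Module.End ℂ (ℂ → ℂ)) :=
  let q := Complex.exp ((Real.pi : ℂ) * Complex.I * ω / ω')
  [shiftMulOp (fun _ => Complex.exp ((Real.pi : ℂ) * Complex.I * lam / ω')) (-(Complex.I * ω)),
    (q - q⁻¹)⁻¹ •
      (shiftMulOp (fun t => Complex.exp (-(2 * (Real.pi : ℂ) * t / ω'))) 0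
        - shiftMulOp (fun t => Complex.exp (-(2 * (Real.pi : ℂ) * t / ω'))) (-(Complex.I * ω))),
    (q * (q - q⁻¹)⁻¹) •
      (Complex.exp ((Real.pi : ℂ) * Complex.I * lam / ω') •
          shiftMulOp (fun t => Complex.exp (2 * (Real.pi : ℂ) * t / ω')) 0
        - Complex.exp (-((Real.pi : ℂ) * Complex.I * lam / ω')) •
          shiftMulOp (fun t => Complex.exp (2 * (Real.pi : ℂ) * t / ω')) (Complex.I * ω))]

lemma mem_adjoin_periodicShiftOps_of_mem_principalSeriesOps {ω ω' lam : ℂ} (hω' : ω' ≠ 0)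
    {X : Module.End ℂ (ℂ → ℂ)} (hX : X ∈ principalSeriesOps ω ω' lam) :
    X ∈ Algebra.adjoin ℂ (periodicShiftOps (Complex.I * ω) (Complex.I * ω')) := by
  have shift_zero := zero_mem (AddSubgroup.zmultiples (Complex.I * ω))
  have shift_pos := AddSubgroup.mem_zmultiples (Complex.I * ω)
  have shift_neg := neg_mem shift_pos
  have hE := periodic_exp_neg_two_pi_mul_div hω'
  have hF := periodic_exp_two_pi_mul_div hω'
  simp only [principalSeriesOps, List.mem_cons, List.not_mem_nil, or_false] at hX
  rcases hX with rfl | rfl | rfl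
  · exact shiftMulOp_mem_adjoin_periodicShiftOps (fun _ => rfl) shift_neg
  · exact Subalgebra.smul_mem _ (sub_mem (shiftMulOp_mem_adjoin_periodicShiftOps hE shift_zero)
      (shiftMulOp_mem_adjoin_periodicShiftOps hE shift_neg)) _
  · exact Subalgebra.smul_mem _ (sub_mem
      (Subalgebra.smul_mem _ (shiftMulOp_mem_adjoin_periodicShiftOps hF shift_zero) _)
      (Subalgebra.smul_mem _ (shiftMulOp_mem_adjoin_periodicShiftOps hF shift_pos) _)) _

theorem modular_double_commutes (ω₁ ω₂ lam : ℂ) (hω₁ : ω₁ ≠ 0) (hω₂ : ω₂ ≠ 0) :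
    let q := Complex.exp ((Real.pi : ℂ) * Complex.I * ω₁ / ω₂)
    let tq := Complex.exp ((Real.pi : ℂ) * Complex.I * ω₂ / ω₁)
    let K := shiftMulOp (fun _ => Complex.exp ((Real.pi : ℂ) * Complex.I * lam / ω₂))
        (-(Complex.I * ω₁))
    let E := (q - q⁻¹)⁻¹ •
        (shiftMulOp (fun t => Complex.exp (-(2 * (Real.pi : ℂ) * t / ω₂))) 0
          - shiftMulOp (fun t => Complex.exp (-(2 * (Real.pi : ℂ) * t / ω₂))) (-(Complex.I * ω₁)))
    let F := (q * (q - q⁻¹)⁻¹) •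
        (Complex.exp ((Real.pi : ℂ) * Complex.I * lam / ω₂) •
            shiftMulOp (fun t => Complex.exp (2 * (Real.pi : ℂ) * t / ω₂)) 0
          - Complex.exp (-((Real.pi : ℂ) * Complex.I * lam / ω₂)) •
            shiftMulOp (fun t => Complex.exp (2 * (Real.pi : ℂ) * t / ω₂)) (Complex.I * ω₁))
    let Kt := shiftMulOp (fun _ => Complex.exp ((Real.pi : ℂ) * Complex.I * lam / ω₁))
        (-(Complex.I * ω₂))
    let Et := (tq - tq⁻¹)⁻¹ •
        (shiftMulOp (fun t => Complex.exp (-(2 * (Real.pi : ℂ) * t / ω₁))) 0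
          - shiftMulOp (fun t => Complex.exp (-(2 * (Real.pi : ℂ) * t / ω₁))) (-(Complex.I * ω₂)))
    let Ft := (tq * (tq - tq⁻¹)⁻¹) •
        (Complex.exp ((Real.pi : ℂ) * Complex.I * lam / ω₁) •
            shiftMulOp (fun t => Complex.exp (2 * (Real.pi : ℂ) * t / ω₁)) 0
          - Complex.exp (-((Real.pi : ℂ) * Complex.I * lam / ω₁)) •
            shiftMulOp (fun t => Complex.exp (2 * (Real.pi : ℂ) * t / ω₁)) (Complex.I * ω₂))
    ∀ X ∈ ([K, E, F] : List ((ℂ → ℂ) →ₗ[ℂ] (ℂ → ℂ))),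
      ∀ Y ∈ ([Kt, Et, Ft] : List ((ℂ → ℂ) →ₗ[ℂ] (ℂ → ℂ))),
        X ∘ₗ Y = Y ∘ₗ X := by
  intro q tq K E F Kt Et Ft X hX Y hY
  exact (commute_of_mem_adjoin_periodicShiftOps
    (mem_adjoin_periodicShiftOps_of_mem_principalSeriesOps (lam := lam) hω₂ hX)
    (mem_adjoin_periodicShiftOps_of_mem_principalSeriesOps (lam := lam) hω₁ hY)).eq
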